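/- arXiv:2306.08282 — 4 statements merged into one kernel-verified Lean document; each statement's English description precedes it below -/
import Mathlib

section
/- For every a > 1, every k ∈ ℕ and every u ≥ a, the k-th iterate of F satisfies F^k(u) = a + ∫_a^u dt/(F^{k−1}(t)·F^{k−2}(t)···F^1(t)·F^0(t)); equivalently, for u > a, F^k is differentiable at u with (F^k)'(u) = 1/(F^{k−1}(u)···F^1(u)·F^0(u)). -/
open Real MeasureTheory Filter Topology Set

/-- `F(u) = a - log a + log u`. -/
noncomputable def Fa (a : ℝ) : ℝ → ℝ := fun u => a - Real.log a + Real.log u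

/-! Since `F'(u) = 1 / u`, the chain rule along the orbit `u, F u, F² u, …` gives
`(F^k)' = ∏_{j<k} 1 / F^j`. As `a` is a fixed point of `F`, the fundamental theorem of calculus
on `[a, u]` turns this into the integral formula. -/

open Finset

theorem hasDerivAt_iterate_of_mapsTo {𝕜 : Type*} [NontriviallyNormedField 𝕜] {f f' : 𝕜 → 𝕜}
    {s : Set 𝕜} (hs : MapsTo f s s) (hf : ∀ x ∈ s, HasDerivAt f (f' x) x) (n : ℕ) {x : 𝕜}
    (hx : x ∈ s) : HasDerivAt f^[n] (∏ j ∈ range n, f' (f^[j] x)) x := by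
  induction n with
  | zero => simpa using hasDerivAt_id x
  | succ n ih =>
    rw [Function.iterate_succ', prod_range_succ, mul_comm]
    exact (hf _ (hs.iterate n hx)).comp x ih

section Fa

variable {a : ℝ}

theorem mapsTo_Fa (ha : 0 < a) : MapsTo (Fa a) (Ici a) (Ici a) := fun u hu => by
  have : Real.log a ≤ Real.log u := Real.log_le_log ha hu
  simp only [Fa, Set.mem_Ici]
  linarith

theorem hasDerivAt_Fa {u : ℝ} (hu : u ≠ 0) : HasDerivAt (Fa a) u⁻¹ u :=
  (Real.hasDerivAt_log hu).const_add _

theorem Fa_iterate_self (k : ℕ) : (Fa a)^[k] a = a :=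
  Function.iterate_fixed (by simp [Fa]) k

theorem Fa_iterate_pos (ha : 0 < a) (k : ℕ) {u : ℝ} (hu : a ≤ u) : 0 < (Fa a)^[k] u :=
  ha.trans_le ((mapsTo_Fa ha).iterate k hu)

theorem hasDerivAt_Fa_iterate (ha : 0 < a) (k : ℕ) {u : ℝ} (hu : a ≤ u) :
    HasDerivAt (Fa a)^[k] (1 / ∏ j ∈ range k, (Fa a)^[j] u) u := by
  rw [one_div, ← prod_inv_distrib]
  exact hasDerivAt_iterate_of_mapsTo (mapsTo_Fa ha)
    (fun v hv => hasDerivAt_Fa (ha.trans_le hv).ne') k hu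

theorem continuousOn_one_div_prod_Fa_iterate (ha : 0 < a) (k : ℕ) :
    ContinuousOn (fun t => 1 / ∏ j ∈ range k, (Fa a)^[j] t) (Ici a) :=
  continuousOn_const.div
    (continuousOn_finsetProd _ fun j _ _ ht =>
      (hasDerivAt_Fa_iterate ha j ht).continuousAt.continuousWithinAt)
    fun _ ht => (prod_pos fun j _ => Fa_iterate_pos ha j ht).ne'

end Fa

/-- For every `a > 1`, `k ∈ ℕ` and `u ≥ a`, the iterate satisfies
`F^k(u) = a + ∫_a^u dt / (F^{k-1}(t) ⋯ F^0(t))`; equivalently, for `u > a`, `F^k` is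
differentiable at `u` with derivative `1 / (F^{k-1}(u) ⋯ F^0(u))`. -/
theorem stmt1 (a : ℝ) (ha : 1 < a) (k : ℕ) :
    (∀ u : ℝ, a ≤ u →
      (Fa a)^[k] u = a + ∫ t in a..u, 1 / ∏ j ∈ Finset.range k, (Fa a)^[j] t) ∧
    (∀ u : ℝ, a < u →
      HasDerivAt ((Fa a)^[k]) (1 / ∏ j ∈ Finset.range k, (Fa a)^[j] u) u) := by
  have ha₀ : 0 < a := one_pos.trans ha
  refine ⟨fun u hu => ?_, fun u hu => hasDerivAt_Fa_iterate ha₀ k hu.le⟩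
  have hsub : uIcc a u ⊆ Ici a := by
    rw [uIcc_of_le hu]
    exact Icc_subset_Ici_self
  rw [intervalIntegral.integral_eq_sub_of_hasDerivAt
    (fun t ht => hasDerivAt_Fa_iterate ha₀ k (hsub ht))
    ((continuousOn_one_div_prod_Fa_iterate ha₀ k).mono hsub).intervalIntegrable,
    Fa_iterate_self]
  ring
end

section
/- For each n ∈ ℕ, lim_{u→∞} φ(u)/F^n(u) = 0. -/
open Real MeasureTheory Filter Topology Set

/-- `F̃(u) = a · ∏_{k=0}^∞ (F^k(u)/a)`. -/
noncomputable def Ftilde (a : ℝ) (u : ℝ) : ℝ := a * ∏' k : ℕ, ((Fa a)^[k] u / a)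

/-- `φ(u) = a + ∫_a^u dt / F̃(t)`. -/
noncomputable def phiFun (a : ℝ) (u : ℝ) : ℝ := a + ∫ t in a..u, 1 / Ftilde a t

/-!
Every factor `F^k(t)/a` of `F̃(t)` is at least `1`, so truncating the product after `n + 1`
factors gives `1/F̃(t) ≤ a^n / ∏_{j ≤ n} F^j(t) = a^n (F^{n+1})'(t)`. Integrating,
`φ(u) ≤ a + a^n (F^{n+1}(u) - a)`, and with `v = F^n(u) → ∞` the right-hand side is
`O(1) + a^n F(v) = O(log v) = o(v)`.
-/

namespace SuperLog

variable {a : ℝ}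

lemma Fa_self (a : ℝ) : Fa a a = a := by
  simp [Fa]

lemma log_div_eq_Fa_sub (ha : 0 < a) {x : ℝ} (hx : 0 < x) : log (x / a) = Fa a x - a := by
  rw [log_div hx.ne' ha.ne', Fa]
  ring

lemma Fa_sub_self_le (ha : 0 < a) {x : ℝ} (hx : 0 < x) : Fa a x - a ≤ (x - a) / a := by
  rw [← log_div_eq_Fa_sub ha hx, sub_div, div_self ha.ne']
  exact log_le_sub_one_of_pos (div_pos hx ha)

lemma mapsTo_Fa (ha : 0 < a) : MapsTo (Fa a) (Ici a) (Ici a) := fun x (hx : a ≤ x) => by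
  have := log_le_log ha hx
  simp only [Fa, mem_Ici]
  linarith

lemma le_iterate_Fa (ha : 0 < a) {t : ℝ} (ht : a ≤ t) (k : ℕ) : a ≤ (Fa a)^[k] t :=
  (mapsTo_Fa ha).iterate k ht

lemma iterate_Fa_pos (ha : 0 < a) {t : ℝ} (ht : a ≤ t) (k : ℕ) : 0 < (Fa a)^[k] t :=
  ha.trans_le (le_iterate_Fa ha ht k)

lemma monotoneOn_iterate_Fa (ha : 0 < a) (k : ℕ) : MonotoneOn (Fa a)^[k] (Ici a) := by
  intro s (hs : a ≤ s) t _ hst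
  induction k with
  | zero => exact hst
  | succ k ih =>
    simp only [Function.iterate_succ_apply', Fa]
    linarith [log_le_log (iterate_Fa_pos ha hs k) ih]

lemma iterate_Fa_sub_le (ha : 0 < a) {t : ℝ} (ht : a ≤ t) (k : ℕ) :
    (Fa a)^[k] t - a ≤ (t - a) / a ^ k := by
  induction k with
  | zero => simp
  | succ k ih =>
    rw [Function.iterate_succ_apply', pow_succ, ← div_div]
    exact (Fa_sub_self_le ha (iterate_Fa_pos ha ht k)).trans
      (div_le_div_of_nonneg_right ih ha.le)

lemma summable_log_iterate_Fa_div (ha : 1 < a) {t : ℝ} (ht : a ≤ t) :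
    Summable fun k : ℕ => log ((Fa a)^[k] t / a) := by
  have ha0 : 0 < a := one_pos.trans ha
  have hgeo : Summable fun k : ℕ => (t - a) / a * (a⁻¹) ^ k :=
    (summable_geometric_of_lt_one (by positivity) (inv_lt_one_of_one_lt₀ ha)).mul_left _
  refine hgeo.of_nonneg_of_le (fun k => log_nonneg ?_) (fun k => ?_)
  · exact (one_le_div ha0).2 (le_iterate_Fa ha0 ht k)
  · rw [log_div_eq_Fa_sub ha0 (iterate_Fa_pos ha0 ht k), ← Function.iterate_succ_apply' (Fa a),
      inv_pow, ← div_eq_mul_inv, div_div, ← pow_succ']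
    exact iterate_Fa_sub_le ha0 ht (k + 1)

lemma Ftilde_eq_mul_exp_tsum (ha : 1 < a) {t : ℝ} (ht : a ≤ t) :
    Ftilde a t = a * exp (∑' k, log ((Fa a)^[k] t / a)) := by
  have ha0 : 0 < a := one_pos.trans ha
  rw [rexp_tsum_eq_tprod (fun k => div_pos (iterate_Fa_pos ha0 ht k) ha0)
    (summable_log_iterate_Fa_div ha ht), Ftilde]

lemma mul_prod_le_Ftilde (ha : 1 < a) {t : ℝ} (ht : a ≤ t) (s : Finset ℕ) :
    a * ∏ k ∈ s, ((Fa a)^[k] t / a) ≤ Ftilde a t := by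
  have ha0 : 0 < a := one_pos.trans ha
  have hpos k : 0 < (Fa a)^[k] t / a := div_pos (iterate_Fa_pos ha0 ht k) ha0
  rw [Ftilde_eq_mul_exp_tsum ha ht, ← Finset.prod_congr rfl fun k _ => exp_log (hpos k),
    ← exp_sum]
  gcongr
  exact (summable_log_iterate_Fa_div ha ht).sum_le_tsum s fun k _ =>
    log_nonneg ((one_le_div ha0).2 (le_iterate_Fa ha0 ht k))

lemma le_Ftilde (ha : 1 < a) {t : ℝ} (ht : a ≤ t) : a ≤ Ftilde a t := by
  simpa using mul_prod_le_Ftilde ha ht ∅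

lemma monotoneOn_Ftilde (ha : 1 < a) : MonotoneOn (Ftilde a) (Ici a) := by
  have ha0 : 0 < a := one_pos.trans ha
  intro s (hs : a ≤ s) t (ht : a ≤ t) hst
  rw [Ftilde_eq_mul_exp_tsum ha hs, Ftilde_eq_mul_exp_tsum ha ht]
  refine mul_le_mul_of_nonneg_left (exp_le_exp.2 ?_) ha0.le
  refine (summable_log_iterate_Fa_div ha hs).tsum_le_tsum (fun k => ?_)
    (summable_log_iterate_Fa_div ha ht)
  gcongr
  · exact div_pos (iterate_Fa_pos ha0 hs k) ha0
  · exact monotoneOn_iterate_Fa ha0 k hs ht hst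

lemma one_div_Ftilde_le (ha : 1 < a) {t : ℝ} (ht : a ≤ t) (n : ℕ) :
    1 / Ftilde a t ≤ a ^ n * ∏ j ∈ Finset.range (n + 1), ((Fa a)^[j] t)⁻¹ := by
  have ha0 : 0 < a := one_pos.trans ha
  have hP : 0 < ∏ j ∈ Finset.range (n + 1), (Fa a)^[j] t :=
    Finset.prod_pos fun j _ => iterate_Fa_pos ha0 ht j
  have htrunc : a * ∏ k ∈ Finset.range (n + 1), ((Fa a)^[k] t / a) =
      (∏ j ∈ Finset.range (n + 1), (Fa a)^[j] t) / a ^ n := by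
    rw [Finset.prod_div_distrib, Finset.prod_const, Finset.card_range, pow_succ]
    field_simp
  calc 1 / Ftilde a t ≤ 1 / ((∏ j ∈ Finset.range (n + 1), (Fa a)^[j] t) / a ^ n) :=
        one_div_le_one_div_of_le (by positivity) (htrunc ▸ mul_prod_le_Ftilde ha ht _)
    _ = a ^ n * ∏ j ∈ Finset.range (n + 1), ((Fa a)^[j] t)⁻¹ := by
      rw [one_div_div, Finset.prod_inv_distrib, div_eq_mul_inv]

lemma intervalIntegrable_one_div_Ftilde (ha : 1 < a) {u : ℝ} (hu : a ≤ u) :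
    IntervalIntegrable (fun t => 1 / Ftilde a t) volume a u := by
  refine AntitoneOn.intervalIntegrable fun s hs t ht hst => ?_
  rw [uIcc_of_le hu] at hs ht
  have hpos := (one_pos.trans ha).trans_le (le_Ftilde ha hs.1)
  exact one_div_le_one_div_of_le hpos (monotoneOn_Ftilde ha hs.1 ht.1 hst)

lemma hasDerivAt_iterate_Fa (ha : 0 < a) {t : ℝ} (ht : a ≤ t) (k : ℕ) :
    HasDerivAt (Fa a)^[k] (∏ j ∈ Finset.range k, ((Fa a)^[j] t)⁻¹) t := by
  induction k with
  | zero => simpa using hasDerivAt_id t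
  | succ k ih =>
    have hF : HasDerivAt (Fa a) ((Fa a)^[k] t)⁻¹ ((Fa a)^[k] t) :=
      (hasDerivAt_log (iterate_Fa_pos ha ht k).ne').const_add _
    rw [Function.iterate_succ', Finset.prod_range_succ, mul_comm]
    exact hF.comp t ih

lemma continuousOn_prod_inv_iterate_Fa (ha : 0 < a) (k : ℕ) :
    ContinuousOn (fun t => ∏ j ∈ Finset.range k, ((Fa a)^[j] t)⁻¹) (Ici a) := by
  intro t (ht : a ≤ t)
  have hc j : ContinuousAt (Fa a)^[j] t := (hasDerivAt_iterate_Fa ha ht j).continuousAt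
  have hne j : (Fa a)^[j] t ≠ 0 := (iterate_Fa_pos ha ht j).ne'
  exact ContinuousAt.continuousWithinAt (by fun_prop (disch := exact hne _))

lemma intervalIntegrable_prod_inv_iterate_Fa (ha : 0 < a) {u : ℝ} (hu : a ≤ u) (k : ℕ) :
    IntervalIntegrable (fun t => ∏ j ∈ Finset.range k, ((Fa a)^[j] t)⁻¹) volume a u :=
  ((continuousOn_prod_inv_iterate_Fa ha k).mono
    (uIcc_of_le hu ▸ Icc_subset_Ici_self)).intervalIntegrable

lemma integral_prod_inv_iterate_Fa (ha : 0 < a) {u : ℝ} (hu : a ≤ u) (k : ℕ) :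
    ∫ t in a..u, ∏ j ∈ Finset.range k, ((Fa a)^[j] t)⁻¹ = (Fa a)^[k] u - a := by
  rw [intervalIntegral.integral_eq_sub_of_hasDerivAt
    (fun t ht => hasDerivAt_iterate_Fa ha (uIcc_of_le hu ▸ ht).1 k)
    (intervalIntegrable_prod_inv_iterate_Fa ha hu k), Function.iterate_fixed (Fa_self a)]

lemma phiFun_le (ha : 1 < a) {u : ℝ} (hu : a ≤ u) (n : ℕ) :
    phiFun a u ≤ a + a ^ n * ((Fa a)^[n + 1] u - a) := by
  have ha0 : 0 < a := one_pos.trans ha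
  have hcmp : ∫ t in a..u, 1 / Ftilde a t ≤
      ∫ t in a..u, a ^ n * ∏ j ∈ Finset.range (n + 1), ((Fa a)^[j] t)⁻¹ :=
    intervalIntegral.integral_mono_on hu (intervalIntegrable_one_div_Ftilde ha hu)
      ((intervalIntegrable_prod_inv_iterate_Fa ha0 hu (n + 1)).const_mul _)
      fun t ht => one_div_Ftilde_le ha ht.1 n
  rw [intervalIntegral.integral_const_mul, integral_prod_inv_iterate_Fa ha0 hu] at hcmp
  rw [phiFun]
  linarith

lemma le_phiFun (ha : 1 < a) {u : ℝ} (hu : a ≤ u) : a ≤ phiFun a u := by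
  have hint : 0 ≤ ∫ t in a..u, 1 / Ftilde a t :=
    intervalIntegral.integral_nonneg hu fun t ht =>
      one_div_nonneg.2 ((one_pos.trans ha).le.trans (le_Ftilde ha ht.1))
  rw [phiFun]
  linarith

lemma tendsto_iterate_Fa_atTop (a : ℝ) (k : ℕ) : Tendsto (Fa a)^[k] atTop atTop := by
  induction k with
  | zero => exact tendsto_id
  | succ k ih =>
    rw [Function.iterate_succ']
    exact (tendsto_atTop_add_const_left _ _ tendsto_log_atTop).comp ih

lemma tendsto_Fa_div_self_atTop (a : ℝ) : Tendsto (fun v => Fa a v / v) atTop (𝓝 0) := by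
  have h := (tendsto_inv_atTop_zero.const_mul (a - log a)).add
    isLittleO_log_id_atTop.tendsto_div_nhds_zero
  rw [mul_zero, add_zero] at h
  refine h.congr' ?_
  filter_upwards [eventually_ne_atTop 0] with v hv
  simp only [Fa, id]
  field_simp

end SuperLog

open SuperLog in
/-- For each `n ∈ ℕ`, `lim_{u→∞} φ(u)/F^n(u) = 0`. -/
theorem stmt4 (a : ℝ) (ha : 1 < a) (n : ℕ) :
    Filter.Tendsto (fun u : ℝ => phiFun a u / (Fa a)^[n] u) Filter.atTop (nhds 0) := by
  have ha0 : 0 < a := one_pos.trans ha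
  have hbound : Tendsto (fun v => (a - a ^ (n + 1)) * v⁻¹ + a ^ n * (Fa a v / v)) atTop (𝓝 0) := by
    simpa using (tendsto_inv_atTop_zero.const_mul _).add
      ((tendsto_Fa_div_self_atTop a).const_mul (a ^ n))
  refine squeeze_zero' ?_ ?_ (hbound.comp (tendsto_iterate_Fa_atTop a n))
  all_goals filter_upwards [eventually_ge_atTop a] with u hu
  · exact div_nonneg (ha0.le.trans (le_phiFun ha hu)) (iterate_Fa_pos ha0 hu n).le
  · have hv := iterate_Fa_pos ha0 hu n
    calc phiFun a u / (Fa a)^[n] u ≤ (a + a ^ n * ((Fa a)^[n + 1] u - a)) / (Fa a)^[n] u := by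
          gcongr
          exact phiFun_le ha hu n
      _ = _ := by
        rw [Function.iterate_succ_apply', Function.comp_apply]
        field_simp
        ring
end

section
/- For every r ≥ exp(a), L(r) ≤ L(exp(r)) ≤ (1+a)·L(r). -/
/-!
The function `F̃` satisfies `u · F̃(F u) = a · F̃(u)`, so substituting `t = a e^{σ - a}` (the
inverse of `F`) in the integral defining `φ` gives `L(e^s) = a ∫_a^{a+s} dt / F̃(t)`. Hence
`L(r) = a I(a + log r)` and `L(e^r) = a I(a + r)` with `I(u) = ∫_a^u dt / F̃(t)`, and the first
inequality is the monotonicity of `I`. For the second, `a + r ≤ a e^{log r + 1}` gives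
`L(e^r) ≤ a² I(a + log r + 1)`, and since `1 / F̃` decreases, the integral over the last unit
interval is at most `I(a + log r) / log r ≤ I(a + log r) / a`.
-/

open Real MeasureTheory Filter Topology Set

/-- The super-logarithm: `L(r) = φ(ar) - a` for `r ≥ 1` and `L(r) = -L(1/r)` for `0 < r < 1`. -/
noncomputable def superLog (a : ℝ) (r : ℝ) : ℝ :=
  if 1 ≤ r then phiFun a (a * r) - a else -(phiFun a (a * (1 / r)) - a)

variable {a s u v : ℝ}

lemma Fa_sub_self_eq_log_div (ha : 0 < a) (hu : 0 < u) : Fa a u - a = log (u / a) := by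
  rw [Fa, log_div hu.ne' ha.ne']
  ring

lemma Fa_sub_self_le (ha : 0 < a) (hu : 0 < u) : Fa a u - a ≤ (u - a) / a := by
  rw [Fa_sub_self_eq_log_div ha hu, sub_div, div_self ha.ne']
  exact log_le_sub_one_of_pos (div_pos hu ha)

lemma Fa_le_Fa (hu : 0 < u) (huv : u ≤ v) : Fa a u ≤ Fa a v := by
  simp only [Fa]
  gcongr

lemma self_le_iterate_Fa (ha : 0 < a) (hu : a ≤ u) (k : ℕ) : a ≤ (Fa a)^[k] u := by
  induction k with
  | zero => exact hu
  | succ k ih =>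
    rw [Function.iterate_succ_apply']
    have := log_le_log ha ih
    simp only [Fa]
    linarith

lemma iterate_Fa_div_pos (ha : 0 < a) (hu : a ≤ u) (k : ℕ) : 0 < (Fa a)^[k] u / a :=
  div_pos (ha.trans_le (self_le_iterate_Fa ha hu k)) ha

lemma iterate_Fa_le_iterate_Fa (ha : 0 < a) (hu : a ≤ u) (huv : u ≤ v) (k : ℕ) :
    (Fa a)^[k] u ≤ (Fa a)^[k] v := by
  induction k with
  | zero => exact huv
  | succ k ih =>
    simp only [Function.iterate_succ_apply']
    exact Fa_le_Fa (ha.trans_le (self_le_iterate_Fa ha hu k)) ih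

lemma iterate_Fa_sub_self_le (ha : 0 < a) (hu : a ≤ u) (k : ℕ) :
    (Fa a)^[k] u - a ≤ (u - a) * a⁻¹ ^ k := by
  induction k with
  | zero => simp
  | succ k ih =>
    rw [Function.iterate_succ_apply', pow_succ, ← mul_assoc]
    calc Fa a ((Fa a)^[k] u) - a ≤ ((Fa a)^[k] u - a) / a :=
          Fa_sub_self_le ha (ha.trans_le (self_le_iterate_Fa ha hu k))
      _ ≤ (u - a) * a⁻¹ ^ k * a⁻¹ := by
          rw [div_eq_mul_inv]
          gcongr

lemma log_iterate_Fa_div (ha : 0 < a) (hu : a ≤ u) (k : ℕ) :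
    log ((Fa a)^[k] u / a) = (Fa a)^[k + 1] u - a := by
  rw [Function.iterate_succ_apply',
    Fa_sub_self_eq_log_div ha (ha.trans_le (self_le_iterate_Fa ha hu k))]

lemma summable_log_iterate_Fa_div (ha : 1 < a) (hu : a ≤ u) :
    Summable fun k => log ((Fa a)^[k] u / a) := by
  have h0 : 0 < a := one_pos.trans ha
  have hgeom : Summable fun k : ℕ => (u - a) * a⁻¹ ^ k :=
    (summable_geometric_of_lt_one (by positivity) (inv_lt_one_of_one_lt₀ ha)).mul_left _
  have hsub : Summable fun k => (Fa a)^[k] u - a :=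
    hgeom.of_nonneg_of_le (fun k => sub_nonneg.2 (self_le_iterate_Fa h0 hu k))
      (iterate_Fa_sub_self_le h0 hu)
  simpa only [log_iterate_Fa_div h0 hu] using (summable_nat_add_iff 1).2 hsub

lemma Ftilde_eq_mul_exp_tsum (ha : 1 < a) (hu : a ≤ u) :
    Ftilde a u = a * exp (∑' k, log ((Fa a)^[k] u / a)) := by
  rw [Ftilde, rexp_tsum_eq_tprod (iterate_Fa_div_pos (one_pos.trans ha) hu)
    (summable_log_iterate_Fa_div ha hu)]

lemma Ftilde_pos (ha : 1 < a) (hu : a ≤ u) : 0 < Ftilde a u := by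
  rw [Ftilde_eq_mul_exp_tsum ha hu]
  exact mul_pos (one_pos.trans ha) (exp_pos _)

lemma Ftilde_le_Ftilde (ha : 1 < a) (hu : a ≤ u) (huv : u ≤ v) : Ftilde a u ≤ Ftilde a v := by
  have h0 : 0 < a := one_pos.trans ha
  rw [Ftilde_eq_mul_exp_tsum ha hu, Ftilde_eq_mul_exp_tsum ha (hu.trans huv)]
  refine mul_le_mul_of_nonneg_left (exp_le_exp.2 ?_) h0.le
  refine Summable.tsum_le_tsum (fun k => ?_) (summable_log_iterate_Fa_div ha hu)
    (summable_log_iterate_Fa_div ha (hu.trans huv))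
  rw [log_iterate_Fa_div h0 hu, log_iterate_Fa_div h0 (hu.trans huv)]
  exact sub_le_sub_right (iterate_Fa_le_iterate_Fa h0 hu huv _) a

lemma antitoneOn_one_div_Ftilde (ha : 1 < a) : AntitoneOn (fun t => 1 / Ftilde a t) (Ici a) :=
  fun _ hu _ _ huv => one_div_le_one_div_of_le (Ftilde_pos ha hu) (Ftilde_le_Ftilde ha hu huv)

lemma mul_Ftilde_Fa (ha : 1 < a) (hu : a ≤ u) : u * Ftilde a (Fa a u) = a * Ftilde a u := by
  have h0 : 0 < a := one_pos.trans ha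
  have hFu : a ≤ Fa a u := self_le_iterate_Fa h0 hu 1
  have hmult : Multipliable fun k => (Fa a)^[k] (Fa a u) / a :=
    multipliable_of_summable_log (iterate_Fa_div_pos h0 hFu) (summable_log_iterate_Fa_div ha hFu)
  rw [Ftilde, Ftilde, tprod_eq_zero_mul' (f := fun k => (Fa a)^[k] u / a)]
  · simp only [Function.iterate_succ_apply, Function.iterate_zero_apply]
    field_simp
  · simpa only [Function.iterate_succ_apply] using hmult

lemma Fa_mul_exp (ha : 0 < a) (s : ℝ) : Fa a (a * exp (s - a)) = s := by
  rw [Fa, log_mul ha.ne' (exp_pos _).ne', log_exp]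
  ring

lemma Ftilde_mul_exp (ha : 1 < a) (hs : a ≤ s) :
    Ftilde a (a * exp (s - a)) = exp (s - a) * Ftilde a s := by
  have h0 : 0 < a := one_pos.trans ha
  have h := mul_Ftilde_Fa ha (le_mul_of_one_le_right h0.le (one_le_exp (sub_nonneg.2 hs)))
  rw [Fa_mul_exp h0] at h
  refine mul_left_cancel₀ h0.ne' ?_
  rw [← h]
  ring

lemma integral_one_div_Ftilde_mul_exp (ha : 1 < a) (hs : 0 ≤ s) :
    ∫ t in a..a * exp s, 1 / Ftilde a t = a * ∫ t in a..a + s, 1 / Ftilde a t := by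
  have h0 : 0 < a := one_pos.trans ha
  set E : ℝ → ℝ := fun σ => a * exp (σ - a) with hE
  have hderiv : ∀ σ, HasDerivAt E (E σ) σ := fun σ => by
    simpa using (((hasDerivAt_id σ).sub_const a).exp).const_mul a
  have hmono : StrictMono E := fun x y hxy => by
    simp only [hE]
    gcongr
  have himage : E '' Icc a (a + s) = Icc a (a * exp s) := by
    rw [ContinuousOn.image_Icc_of_monotoneOn (by linarith)
      (fun σ _ => (hderiv σ).continuousAt.continuousWithinAt) (hmono.monotone.monotoneOn _)]
    simp [hE]
  rw [intervalIntegral.integral_of_le (le_mul_of_one_le_right h0.le (one_le_exp hs)),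
    intervalIntegral.integral_of_le (by linarith), ← integral_Icc_eq_integral_Ioc,
    ← integral_Icc_eq_integral_Ioc, ← himage, integral_image_eq_integral_abs_deriv_smul
    measurableSet_Icc (fun σ _ => (hderiv σ).hasDerivWithinAt) hmono.injective.injOn,
    ← integral_const_mul]
  refine setIntegral_congr_fun measurableSet_Icc fun σ hσ => ?_
  have hF := Ftilde_pos ha hσ.1
  simp only [hE, smul_eq_mul, abs_of_pos (mul_pos h0 (exp_pos _)), Ftilde_mul_exp ha hσ.1]
  field_simp

lemma superLog_exp (ha : 1 < a) (hs : 0 ≤ s) :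
    superLog a (exp s) = a * ∫ t in a..a + s, 1 / Ftilde a t := by
  rw [superLog, if_pos (one_le_exp hs), phiFun, add_sub_cancel_left,
    integral_one_div_Ftilde_mul_exp ha hs]

lemma AntitoneOn.sub_mul_integral_le {g : ℝ → ℝ} (hg : AntitoneOn g (Icc a v)) (hau : a ≤ u)
    (huv : u ≤ v) : (u - a) * ∫ t in u..v, g t ≤ (v - u) * ∫ t in a..u, g t := by
  have hu : u ∈ Icc a v := ⟨hau, huv⟩
  have hright : ∫ t in u..v, g t ≤ (v - u) * g u := by
    simpa using intervalIntegral.integral_mono_on huv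
      ((hg.mono (by simp [uIcc_of_le huv, Icc_subset_Icc_left hau])).intervalIntegrable)
      (intervalIntegrable_const (μ := volume)) fun t ht => hg hu ⟨hau.trans ht.1, ht.2⟩ ht.1
  have hleft : (u - a) * g u ≤ ∫ t in a..u, g t := by
    simpa using intervalIntegral.integral_mono_on hau (intervalIntegrable_const (μ := volume))
      ((hg.mono (by simp [uIcc_of_le hau, Icc_subset_Icc_right huv])).intervalIntegrable)
      fun t ht => hg ⟨ht.1, ht.2.trans huv⟩ hu ht.2
  calc (u - a) * ∫ t in u..v, g t ≤ (u - a) * ((v - u) * g u) :=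
        mul_le_mul_of_nonneg_left hright (sub_nonneg.2 hau)
    _ = (v - u) * ((u - a) * g u) := by ring
    _ ≤ (v - u) * ∫ t in a..u, g t := mul_le_mul_of_nonneg_left hleft (sub_nonneg.2 huv)

lemma intervalIntegrable_one_div_Ftilde (ha : 1 < a) (hu : a ≤ u) (huv : u ≤ v) :
    IntervalIntegrable (fun t => 1 / Ftilde a t) volume u v :=
  ((antitoneOn_one_div_Ftilde ha).mono (by
    rw [uIcc_of_le huv]
    exact Icc_subset_Ici_self.trans (Ici_subset_Ici.2 hu))).intervalIntegrable

lemma integral_one_div_Ftilde_le (ha : 1 < a) (hu : a ≤ u) (huv : u ≤ v) :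
    ∫ t in a..u, 1 / Ftilde a t ≤ ∫ t in a..v, 1 / Ftilde a t :=
  intervalIntegral.integral_mono_interval le_rfl hu huv
    ((ae_restrict_mem measurableSet_Ioc).mono fun _ ht =>
      (one_div_pos.2 (Ftilde_pos ha ht.1.le)).le)
    (intervalIntegrable_one_div_Ftilde ha le_rfl (hu.trans huv))

lemma mul_integral_one_div_Ftilde_add_one_le (ha : 1 < a) (hu : 2 * a ≤ u) :
    a * ∫ t in a..u + 1, 1 / Ftilde a t ≤ (1 + a) * ∫ t in a..u, 1 / Ftilde a t := by
  have hau : a ≤ u := by linarith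
  rw [← intervalIntegral.integral_add_adjacent_intervals
    (intervalIntegrable_one_div_Ftilde ha le_rfl hau)
    (intervalIntegrable_one_div_Ftilde ha hau (by linarith : u ≤ u + 1))]
  set J := ∫ t in u..u + 1, 1 / Ftilde a t
  have hJ : 0 ≤ J := intervalIntegral.integral_nonneg (by linarith)
    fun t ht => (one_div_pos.2 (Ftilde_pos ha (hau.trans ht.1))).le
  have htail : (u - a) * J ≤ ∫ t in a..u, 1 / Ftilde a t := by
    simpa only [add_sub_cancel_left, one_mul] using
      ((antitoneOn_one_div_Ftilde ha).mono Icc_subset_Ici_self).sub_mul_integral_le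
        hau (by linarith : u ≤ u + 1)
  have haJ : a * J ≤ (u - a) * J := mul_le_mul_of_nonneg_right (by linarith) hJ
  linarith

/-- For every `r ≥ exp(a)`, `L(r) ≤ L(exp(r)) ≤ (1+a)·L(r)`. -/
theorem stmt7 (a : ℝ) (ha : 1 < a) (r : ℝ) (hr : Real.exp a ≤ r) :
    superLog a r ≤ superLog a (Real.exp r) ∧
    superLog a (Real.exp r) ≤ (1 + a) * superLog a r := by
  have h0 : 0 < a := one_pos.trans ha
  have hr1 : 1 ≤ r := (one_le_exp h0.le).trans hr
  set x := log r
  have hxa : a ≤ x := (le_log_iff_exp_le (by linarith)).2 hr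
  have hrx : exp x = r := exp_log (by linarith)
  have hxr : x ≤ r := log_le_self (by linarith)
  have hra : a + r ≤ a * exp (x + 1) := by
    rw [exp_add, hrx]
    calc a + r ≤ 2 * (a * r) := by nlinarith
      _ ≤ a * (r * exp 1) := by
          nlinarith [add_one_le_exp 1, mul_pos h0 (by linarith : (0:ℝ) < r)]
  rw [← hrx, superLog_exp ha (by linarith), hrx, superLog_exp ha (by linarith)]
  constructor
  · exact mul_le_mul_of_nonneg_left
      (integral_one_div_Ftilde_le ha (by linarith) (by linarith)) h0.le
  · calc a * ∫ t in a..a + r, 1 / Ftilde a t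
        ≤ a * ∫ t in a..a * exp (x + 1), 1 / Ftilde a t :=
          mul_le_mul_of_nonneg_left (integral_one_div_Ftilde_le ha (by linarith) hra) h0.le
      _ = a * (a * ∫ t in a..a + x + 1, 1 / Ftilde a t) := by
          rw [integral_one_div_Ftilde_mul_exp ha (by linarith), add_assoc]
      _ ≤ a * ((1 + a) * ∫ t in a..a + x, 1 / Ftilde a t) :=
          mul_le_mul_of_nonneg_left
            (mul_integral_one_div_Ftilde_add_one_le ha (by linarith)) h0.le
      _ = (1 + a) * (a * ∫ t in a..a + x, 1 / Ftilde a t) := by ring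
end

section
/- Let g be admissible and let u : ℝ^n → ℝ be Lebesgue measurable with μ_g[u](t) < ∞ for every t > 0. Then the rearrangement R_g[u] is equimeasurable with u: μ_g[u](t) = μ_g[R_g[u]](t) for every t ≥ 0. -/
open Real MeasureTheory Filter Topology Set

/-- The measure determined by `g`: `μ_g(A) = ∫_A g(x) dx`. -/
noncomputable def muG (n : ℕ) (g : EuclideanSpace ℝ (Fin n) → ℝ)
    (A : Set (EuclideanSpace ℝ (Fin n))) : ENNReal :=
  ∫⁻ x in A, ENNReal.ofReal (g x)

/-- The distribution function of `u` with respect to `g`: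
`μ_g[u](t) = μ_g({x : |u(x)| > t})`. -/
noncomputable def distG (n : ℕ) (g u : EuclideanSpace ℝ (Fin n) → ℝ) (t : ℝ) : ENNReal :=
  muG n g {x | t < |u x|}

/-- The rearrangement of `u` with respect to `g`:
`R_g[u](x) = sup {t ≥ 0 : μ_g[u](t) > μ_g(B_{|x|})}`. -/
noncomputable def rearrG (n : ℕ) (g u : EuclideanSpace ℝ (Fin n) → ℝ)
    (x : EuclideanSpace ℝ (Fin n)) : ℝ :=
  sSup {t : ℝ | 0 ≤ t ∧ muG n g (Metric.ball 0 ‖x‖) < distG n g u t}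

/-- `g` is admissible: locally integrable, radial, continuous away from the origin,
nonnegative, and nonincreasing in `|x|`. -/
def Admissible (n : ℕ) (g : EuclideanSpace ℝ (Fin n) → ℝ) : Prop :=
  MeasureTheory.LocallyIntegrable g MeasureTheory.volume ∧
  (∀ x y : EuclideanSpace ℝ (Fin n), ‖x‖ = ‖y‖ → g x = g y) ∧
  ContinuousOn g {x : EuclideanSpace ℝ (Fin n) | x ≠ 0} ∧
  (∀ x : EuclideanSpace ℝ (Fin n), x ≠ 0 → 0 ≤ g x) ∧
  (∀ x y : EuclideanSpace ℝ (Fin n), x ≠ 0 → y ≠ 0 → ‖x‖ ≤ ‖y‖ → g y ≤ g x)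

/-!
The superlevel set `{t < R_g[u]}` agrees, up to a `μ_g`-null set, with
`{x : μ_g(B_|x|) < μ_g[u](t)}`: the distribution function is right-continuous and tends to `0`,
and the points `x` with `μ_g(B_|x|) = 0` form a null set. Since spheres are `μ_g`-null and balls
have finite `μ_g`-measure, `r ↦ μ_g(B_r)` is continuous, so this set is a ball (or the whole
space) of `μ_g`-measure exactly `μ_g[u](t)`. In dimension `0` the space is a point and
`R_g[u] = |u|` unless `μ_g = 0`.
-/

open Metric ENNReal

section BallMeasure

variable {E : Type*} [NormedAddCommGroup E] [MeasurableSpace E] {ν : Measure E} {R : ℝ}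
  {α : ℝ≥0∞}

lemma measure_closedBall_eq_measure_ball (h : ν (sphere (0 : E) R) = 0) :
    ν (closedBall (0 : E) R) = ν (ball 0 R) := by
  refine le_antisymm ?_ (measure_mono ball_subset_closedBall)
  rw [← ball_union_sphere]
  exact (measure_union_le _ _).trans (by rw [h, add_zero])

lemma measure_ball_le_of_forall_lt (h : ∀ r < R, ν (ball (0 : E) r) ≤ α) :
    ν (ball (0 : E) R) ≤ α := by
  have hunion : ball (0 : E) R = ⋃ r : Iio R, ball 0 r := by
    rw [← biUnion_lt_ball, iUnion_subtype]; rfl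
  rw [hunion, Monotone.measure_iUnion (s := fun r : Iio R => ball (0 : E) r)
    fun _ _ hr => ball_subset_ball hr]
  exact iSup_le fun r => h r r.2

lemma le_measure_ball_of_forall_gt [OpensMeasurableSpace E] (hsphere : ν (sphere (0 : E) R) = 0)
    (hfin : ∃ r > R, ν (ball (0 : E) r) ≠ ∞) (h : ∀ r > R, α ≤ ν (ball (0 : E) r)) :
    α ≤ ν (ball (0 : E) R) := by
  have hlim := tendsto_measure_biInter_gt (μ := ν) (s := ball (0 : E)) (a := R)
    (fun _ _ => measurableSet_ball.nullMeasurableSet) (fun _ _ _ hij => ball_subset_ball hij) hfin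
  rw [biInter_gt_ball, measure_closedBall_eq_measure_ball hsphere] at hlim
  exact ge_of_tendsto hlim (eventually_nhdsWithin_of_forall h)

lemma measure_setOf_measure_ball_lt [OpensMeasurableSpace E]
    (hsphere : ∀ r, ν (sphere (0 : E) r) = 0) (hball : ∀ r, ν (ball (0 : E) r) ≠ ∞) :
    ν {x | ν (ball 0 ‖x‖) < α} = min α (ν univ) := by
  rcases eq_zero_or_pos α with rfl | hα
  · simp
  set S := {r : ℝ | ν (ball (0 : E) r) < α}
  have hS_lower : ∀ {r r'}, r ≤ r' → r' ∈ S → r ∈ S := fun hr h =>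
    (measure_mono (ball_subset_ball hr)).trans_lt h
  have h0S : (0 : ℝ) ∈ S := by simpa [S] using hα
  by_cases hbdd : BddAbove S
  · set R := sSup S
    have hball_le : ν (ball 0 R) ≤ α := measure_ball_le_of_forall_lt fun r hr => by
      obtain ⟨s, hs, hrs⟩ := exists_lt_of_lt_csSup ⟨0, h0S⟩ hr
      exact (hS_lower hrs.le hs).le
    have hle_ball : α ≤ ν (ball 0 R) := le_measure_ball_of_forall_gt (hsphere R)
      ⟨R + 1, lt_add_one R, hball _⟩
      fun r hr => not_lt.1 fun hrS => (le_csSup hbdd hrS).not_gt hr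
    have hlevel : ν {x | ν (ball 0 ‖x‖) < α} = ν (ball 0 R) := by
      refine le_antisymm ?_ (measure_mono fun x hx => ?_)
      · rw [← measure_closedBall_eq_measure_ball (hsphere R)]
        exact measure_mono fun x hx => mem_closedBall_zero_iff.2 (le_csSup hbdd hx)
      · obtain ⟨s, hs, hxs⟩ := exists_lt_of_lt_csSup ⟨0, h0S⟩ (mem_ball_zero_iff.1 hx)
        exact hS_lower hxs.le hs
    rw [hlevel, le_antisymm hball_le hle_ball,
      min_eq_left (hle_ball.trans (measure_mono (subset_univ _)))]
  · have hlevel : {x : E | ν (ball 0 ‖x‖) < α} = univ := eq_univ_of_forall fun x => by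
      obtain ⟨r, hr, hxr⟩ := not_bddAbove_iff.1 hbdd ‖x‖
      exact hS_lower hxr.le hr
    have huniv : ν univ ≤ α := by
      rw [← iUnion_ball_nat (0 : E), Monotone.measure_iUnion (s := fun k : ℕ => ball (0 : E) k)
        fun _ _ h => ball_subset_ball (Nat.cast_le.2 h)]
      refine iSup_le fun k => ?_
      obtain ⟨r, hr, hkr⟩ := not_bddAbove_iff.1 hbdd k
      exact (hS_lower hkr.le hr).le
    rw [hlevel, min_eq_right huniv]

lemma measure_setOf_measure_ball_eq_zero [OpensMeasurableSpace E]
    (hsphere : ∀ r, ν (sphere (0 : E) r) = 0) (hball : ∀ r, ν (ball (0 : E) r) ≠ ∞) :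
    ν {x | ν (ball (0 : E) ‖x‖) = 0} = 0 := by
  refine le_antisymm (ENNReal.le_of_forall_pos_le_add fun ε hε _ => ?_) zero_le
  calc ν {x | ν (ball (0 : E) ‖x‖) = 0} ≤ ν {x | ν (ball 0 ‖x‖) < ε} :=
        measure_mono fun _ hx => Eq.trans_lt hx (ENNReal.coe_pos.2 hε)
    _ = min (ε : ℝ≥0∞) (ν univ) := measure_setOf_measure_ball_lt hsphere hball
    _ ≤ 0 + ε := by rw [zero_add]; exact min_le_left _ _

end BallMeasure

section Distribution

variable {X : Type*} [MeasurableSpace X] {μ : Measure X} {f : X → ℝ}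

lemma exists_gt_lt_measure_setOf_lt {m : ℝ≥0∞} {t : ℝ} (h : m < μ {x | t < f x}) :
    ∃ s > t, m < μ {x | s < f x} := by
  have hunion : {x | t < f x} = ⋃ s : Ioi t, {x | (s : ℝ) < f x} := by
    ext x
    simp only [mem_ofPred_eq, mem_iUnion, Subtype.exists, mem_Ioi, exists_prop]
    exact ⟨exists_between, fun ⟨s, hts, hs⟩ => hts.trans hs⟩
  rw [hunion, Antitone.measure_iUnion (s := fun s : Ioi t => {x | (s : ℝ) < f x})
    fun _ _ hs _ hx => lt_of_le_of_lt (Subtype.coe_le_coe.2 hs) hx, lt_iSup_iff] at h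
  obtain ⟨s, hs⟩ := h
  exact ⟨s, s.2, hs⟩

lemma tendsto_measure_setOf_lt_atTop (hf : Measurable f) (hfin : ∃ s, μ {x | s < f x} ≠ ∞) :
    Tendsto (fun s => μ {x | s < f x}) atTop (𝓝 0) := by
  have hlim := tendsto_measure_iInter_atTop (μ := μ) (s := fun s : ℝ => {x | s < f x})
    (fun _ => (measurableSet_lt measurable_const hf).nullMeasurableSet)
    (fun _ _ hs _ hx => lt_of_le_of_lt hs hx) hfin
  have hempty : ⋂ s : ℝ, {x | s < f x} = ∅ :=
    eq_empty_of_forall_notMem fun x hx => lt_irrefl (f x) (mem_iInter.1 hx (f x))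
  rwa [hempty, measure_empty] at hlim

end Distribution

section Rearrangement

variable {E : Type*} [NormedAddCommGroup E] [MeasurableSpace E] {ν : Measure E} {u : E → ℝ}
  {t : ℝ} {x : E}

noncomputable def rearrangement (ν : Measure E) (u : E → ℝ) (x : E) : ℝ :=
  sSup {t : ℝ | 0 ≤ t ∧ ν (ball 0 ‖x‖) < ν {y | t < |u y|}}

lemma rearrangement_nonneg : 0 ≤ rearrangement ν u x :=
  Real.sSup_nonneg fun _ ht => ht.1

lemma measure_ball_lt_of_lt_rearrangement (ht : 0 ≤ t) (h : t < rearrangement ν u x) :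
    ν (ball 0 ‖x‖) < ν {y | t < |u y|} := by
  rcases eq_empty_or_nonempty {t : ℝ | 0 ≤ t ∧ ν (ball 0 ‖x‖) < ν {y | t < |u y|}} with hS | hS
  · rw [rearrangement, hS, Real.sSup_empty] at h
    exact absurd ht h.not_ge
  · obtain ⟨s, hs, hts⟩ := exists_lt_of_lt_csSup hS h
    exact hs.2.trans_le (measure_mono fun y hy => hts.le.trans_lt hy)

lemma lt_rearrangement_of_measure_ball_lt (hu : Measurable u)
    (hfin : ∃ s, ν {y | s < |u y|} ≠ ∞) (hx : ν (ball 0 ‖x‖) ≠ 0) (ht : 0 ≤ t)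
    (h : ν (ball 0 ‖x‖) < ν {y | t < |u y|}) : t < rearrangement ν u x := by
  obtain ⟨s, hts, hs⟩ := exists_gt_lt_measure_setOf_lt h
  obtain ⟨b, hb⟩ := eventually_atTop.1 <| (tendsto_measure_setOf_lt_atTop hu.abs hfin).eventually
    (gt_mem_nhds (pos_iff_ne_zero.2 hx))
  have hbdd : BddAbove {t : ℝ | 0 ≤ t ∧ ν (ball 0 ‖x‖) < ν {y | t < |u y|}} :=
    ⟨b, fun s' hs' => not_lt.1 fun hbs => (hb s' hbs.le).not_gt hs'.2⟩
  exact hts.trans_le (le_csSup hbdd ⟨ht.trans hts.le, hs⟩)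

lemma setOf_lt_abs_rearrangement_ae_eq [OpensMeasurableSpace E]
    (hsphere : ∀ r, ν (sphere (0 : E) r) = 0) (hball : ∀ r, ν (ball (0 : E) r) ≠ ∞)
    (hu : Measurable u) (hfin : ∃ s, ν {y | s < |u y|} ≠ ∞) (ht : 0 ≤ t) :
    {x | t < |rearrangement ν u x|} =ᵐ[ν] {x | ν (ball 0 ‖x‖) < ν {y | t < |u y|}} := by
  simp_rw [abs_of_nonneg rearrangement_nonneg]
  have hsub : {x | t < rearrangement ν u x} ⊆ {x | ν (ball 0 ‖x‖) < ν {y | t < |u y|}} :=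
    fun _ => measure_ball_lt_of_lt_rearrangement ht
  refine ae_eq_set.2 ⟨by rw [sdiff_eq_empty.2 hsub, measure_empty],
    measure_mono_null ?_ (measure_setOf_measure_ball_eq_zero hsphere hball)⟩
  rintro x ⟨hlt, hnot⟩
  by_contra hx
  exact hnot (lt_rearrangement_of_measure_ball_lt hu hfin hx ht hlt)

theorem measure_setOf_lt_abs_rearrangement [OpensMeasurableSpace E]
    (hsphere : ∀ r, ν (sphere (0 : E) r) = 0) (hball : ∀ r, ν (ball (0 : E) r) ≠ ∞)
    (hu : Measurable u) (hfin : ∃ s, ν {y | s < |u y|} ≠ ∞) (ht : 0 ≤ t) :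
    ν {x | t < |rearrangement ν u x|} = ν {x | t < |u x|} := by
  rw [measure_congr (setOf_lt_abs_rearrangement_ae_eq hsphere hball hu hfin ht),
    measure_setOf_measure_ball_lt hsphere hball, min_eq_left (measure_mono (subset_univ _))]

lemma rearrangement_eq_abs_of_subsingleton [Subsingleton E] (hν : ν ≠ 0) (x : E) :
    rearrangement ν u x = |u x| := by
  have hlevel (s : ℝ) : 0 < ν {y | s < |u y|} ↔ s < |u x| := by
    by_cases hs : s < |u x|
    · rw [show {y | s < |u y|} = univ from
        eq_univ_of_forall fun y => by rwa [Subsingleton.elim y x]]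
      exact iff_of_true (Measure.measure_univ_pos.2 hν) hs
    · rw [show {y | s < |u y|} = ∅ from
        eq_empty_of_forall_notMem fun y hy => hs (by rwa [Subsingleton.elim y x] at hy)]
      simp [hs]
  have hS : {t : ℝ | 0 ≤ t ∧ ν (ball 0 ‖x‖) < ν {y | t < |u y|}} = Ico 0 |u x| := by
    ext s
    simp [Subsingleton.elim x 0, hlevel]
  rw [rearrangement, hS]
  rcases (abs_nonneg (u x)).eq_or_lt with h | h
  · rw [← h, Ico_self, Real.sSup_empty]
  · exact csSup_Ico h

lemma measure_setOf_lt_abs_rearrangement_of_subsingleton [Subsingleton E] (t : ℝ) :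
    ν {x | t < |rearrangement ν u x|} = ν {x | t < |u x|} := by
  rcases eq_or_ne ν 0 with rfl | hν
  · simp
  · simp_rw [rearrangement_eq_abs_of_subsingleton hν, abs_abs]

end Rearrangement

section WeightedMeasure

variable {n : ℕ} {g : EuclideanSpace ℝ (Fin n) → ℝ}

noncomputable def measureG (n : ℕ) (g : EuclideanSpace ℝ (Fin n) → ℝ) :
    Measure (EuclideanSpace ℝ (Fin n)) :=
  volume.withDensity fun x => ENNReal.ofReal (g x)

lemma muG_eq_measureG (A : Set (EuclideanSpace ℝ (Fin n))) : muG n g A = measureG n g A :=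
  (withDensity_apply' _ _).symm

lemma distG_eq_measureG (u : EuclideanSpace ℝ (Fin n) → ℝ) (t : ℝ) :
    distG n g u t = measureG n g {x | t < |u x|} :=
  muG_eq_measureG _

lemma rearrG_eq_rearrangement (u : EuclideanSpace ℝ (Fin n) → ℝ) :
    rearrG n g u = rearrangement (measureG n g) u := by
  funext x
  simp only [rearrG, rearrangement, distG, muG_eq_measureG]

lemma measureG_sphere [Nontrivial (EuclideanSpace ℝ (Fin n))] (x : EuclideanSpace ℝ (Fin n))
    (r : ℝ) : measureG n g (sphere x r) = 0 :=
  withDensity_absolutelyContinuous _ _ (Measure.addHaar_sphere volume x r)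

lemma measureG_ball_ne_top (hg : LocallyIntegrable g volume) (x : EuclideanSpace ℝ (Fin n))
    (r : ℝ) : measureG n g (ball x r) ≠ ∞ := by
  rw [← muG_eq_measureG]
  exact ((lintegral_mono_set ball_subset_closedBall).trans_lt
    (hg.integrableOn_isCompact (isCompact_closedBall x r)).lintegral_lt_top).ne

end WeightedMeasure

/-- If `g` is admissible and `u` is measurable with finite distribution function for
every `t > 0`, then `R_g[u]` is equimeasurable with `u`:
`μ_g[u](t) = μ_g[R_g[u]](t)` for every `t ≥ 0`. -/
theorem stmt9 (n : ℕ) (g u : EuclideanSpace ℝ (Fin n) → ℝ)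
    (hg : Admissible n g) (hu : Measurable u)
    (hfin : ∀ t : ℝ, 0 < t → distG n g u t < ⊤) :
    ∀ t : ℝ, 0 ≤ t → distG n g u t = distG n g (rearrG n g u) t := by
  intro t ht
  rw [distG_eq_measureG, distG_eq_measureG, rearrG_eq_rearrangement]
  symm
  rcases subsingleton_or_nontrivial (EuclideanSpace ℝ (Fin n)) with _ | _
  · exact measure_setOf_lt_abs_rearrangement_of_subsingleton t
  · refine measure_setOf_lt_abs_rearrangement (measureG_sphere 0) (measureG_ball_ne_top hg.1 0)
      hu ⟨1, distG_eq_measureG u 1 ▸ (hfin 1 one_pos).ne⟩ ht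
end
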